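/- Let u(x,y,z,w) = sin(x+z)·cosh(y+w), v(x,y,z,w) = −cos(x+z)·sinh(y+w), and f = (u, v, −u, −v) : ℝ⁴ → ℝ⁴. Then p = (x,y,z,w) is a Lagrangian point of Γ_f (i.e. Df(p) is self-adjoint) if and only if cos(x+z) = 0 and y + w = 0. Hence the set of Lagrangian points of Γ_f is the infinite discrete family of parallel 2-planes ⋃_{k∈ℤ} { (a, b, π/2 + kπ − a, −b) : a, b ∈ ℝ }, i.e. the affine planes through (0, 0, π/2 + kπ, 0) spanned by (1,0,−1,0) and (0,1,0,−1). -/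

import Mathlib

/-!
STATEMENT 8: With `u(x,y,z,w) = sin(x+z)·cosh(y+w)`, `v(x,y,z,w) = −cos(x+z)·sinh(y+w)`
and `f = (u, v, −u, −v)`, a point `p = (x,y,z,w)` is a Lagrangian point of `Γ_f`
(i.e. `Df(p)` is self-adjoint) iff `cos(x+z) = 0` and `y + w = 0`. Hence the set
of Lagrangian points is `⋃_{k∈ℤ} {(a, b, π/2 + kπ − a, −b) : a, b ∈ ℝ}`.
-/

open scoped RealInnerProductSpace

noncomputable section

abbrev E4 : Type := EuclideanSpace ℝ (Fin 4)

noncomputable def mk4 (a b c d : ℝ) : E4 := (WithLp.equiv 2 (Fin 4 → ℝ)).symm ![a, b, c, d]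

noncomputable def u8 (p : E4) : ℝ := Real.sin (p 0 + p 2) * Real.cosh (p 1 + p 3)

noncomputable def v8 (p : E4) : ℝ := -(Real.cos (p 0 + p 2) * Real.sinh (p 1 + p 3))

noncomputable def f8 : E4 → E4 := fun p => mk4 (u8 p) (v8 p) (-(u8 p)) (-(v8 p))

/-!
Write `s = x + z`, `t = y + w`, `C = cos s cosh t` and `S = sin s sinh t`. The Jacobian of `f`
has rows `(C, S, C, S)`, `(S, -C, S, -C)` and their negatives, so it is symmetric iff
`C = S = 0`. As `cosh t > 0` and `cos s = 0` forces `sin s ≠ 0`, this means `cos s = 0` and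
`sinh t = 0`, i.e. `t = 0`.
-/

open Real Matrix

theorem Matrix.adjoint_toEuclideanCLM_eq_self_iff {𝕜 n : Type*} [RCLike 𝕜] [Fintype n]
    [DecidableEq n] (M : Matrix n n 𝕜) :
    ContinuousLinearMap.adjoint (toEuclideanCLM (n := n) (𝕜 := 𝕜) M) =
        toEuclideanCLM (n := n) (𝕜 := 𝕜) M ↔ M.IsHermitian := by
  rw [← ContinuousLinearMap.star_eq_adjoint, ← map_star, EmbeddingLike.apply_eq_iff_eq]
  rfl

theorem cos_mul_cosh_eq_zero_and_sin_mul_sinh_eq_zero_iff (a b : ℝ) :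
    cos a * cosh b = 0 ∧ sin a * sinh b = 0 ↔ cos a = 0 ∧ b = 0 := by
  have sin_ne_zero_of_cos_eq_zero : cos a = 0 → sin a ≠ 0 := fun hc hs => by
    simpa [hc, hs] using sin_sq_add_cos_sq a
  simp only [mul_eq_zero, (cosh_pos b).ne', or_false, sinh_eq_zero]
  constructor
  · rintro ⟨hc, hs | hb⟩
    exacts [absurd hs (sin_ne_zero_of_cos_eq_zero hc), ⟨hc, hb⟩]
  · rintro ⟨hc, hb⟩
    exact ⟨hc, Or.inr hb⟩

theorem cos_add_eq_zero_and_add_eq_zero_iff (x y z w : ℝ) :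
    cos (x + z) = 0 ∧ y + w = 0 ↔ ∃ k : ℤ, z = π / 2 + k * π - x ∧ w = -y := by
  rw [cos_eq_zero_iff]
  constructor
  · rintro ⟨⟨k, hk⟩, hw⟩
    exact ⟨k, by linarith, by linarith⟩
  · rintro ⟨k, rfl, rfl⟩
    exact ⟨⟨k, by ring⟩, by ring⟩

theorem EuclideanSpace.hasFDerivAt_apply_add_apply {ι : Type*} [Fintype ι] (i j : ι)
    (p : EuclideanSpace ℝ ι) :
    HasFDerivAt (fun q : EuclideanSpace ℝ ι => q i + q j)
      (EuclideanSpace.proj (𝕜 := ℝ) i + EuclideanSpace.proj j) p :=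
  (PiLp.hasFDerivAt_apply 2 p i).add (PiLp.hasFDerivAt_apply 2 p j)

def f8Jacobian (c s : ℝ) : Matrix (Fin 4) (Fin 4) ℝ :=
  !![c, s, c, s; s, -c, s, -c; -c, -s, -c, -s; -s, c, -s, c]

theorem isHermitian_f8Jacobian_iff (c s : ℝ) :
    (f8Jacobian c s).IsHermitian ↔ c = 0 ∧ s = 0 := by
  constructor
  · intro h
    have h02 := h.apply 0 2
    have h03 := h.apply 0 3
    simp only [f8Jacobian, of_apply, cons_val, star_trivial] at h02 h03
    constructor <;> linarith
  · rintro ⟨rfl, rfl⟩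
    ext i j
    fin_cases i <;> fin_cases j <;> simp [f8Jacobian]

theorem hasFDerivAt_u8 (p : E4) :
    HasFDerivAt u8
      ((cos (p 0 + p 2) * cosh (p 1 + p 3)) •
          (EuclideanSpace.proj (𝕜 := ℝ) 0 + EuclideanSpace.proj 2) +
        (sin (p 0 + p 2) * sinh (p 1 + p 3)) •
          (EuclideanSpace.proj 1 + EuclideanSpace.proj 3)) p :=
  (((hasDerivAt_sin _).comp_hasFDerivAt p (EuclideanSpace.hasFDerivAt_apply_add_apply 0 2 p)).mul
    ((hasDerivAt_cosh _).comp_hasFDerivAt p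
      (EuclideanSpace.hasFDerivAt_apply_add_apply 1 3 p))).congr_fderiv
    (by ext x; simp; ring)

theorem hasFDerivAt_v8 (p : E4) :
    HasFDerivAt v8
      ((sin (p 0 + p 2) * sinh (p 1 + p 3)) •
          (EuclideanSpace.proj (𝕜 := ℝ) 0 + EuclideanSpace.proj 2) -
        (cos (p 0 + p 2) * cosh (p 1 + p 3)) •
          (EuclideanSpace.proj 1 + EuclideanSpace.proj 3)) p :=
  (((hasDerivAt_cos _).comp_hasFDerivAt p (EuclideanSpace.hasFDerivAt_apply_add_apply 0 2 p)).mul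
    ((hasDerivAt_sinh _).comp_hasFDerivAt p
      (EuclideanSpace.hasFDerivAt_apply_add_apply 1 3 p))).neg.congr_fderiv
    (by ext x; simp; ring)

theorem hasFDerivAt_f8 (p : E4) :
    HasFDerivAt f8
      (toEuclideanCLM (n := Fin 4) (𝕜 := ℝ)
        (f8Jacobian (cos (p 0 + p 2) * cosh (p 1 + p 3))
          (sin (p 0 + p 2) * sinh (p 1 + p 3)))) p := by
  refine hasFDerivWithinAt_univ.1
    ((hasFDerivWithinAt_piLp 2).2 fun i => HasFDerivAt.hasFDerivWithinAt ?_)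
  fin_cases i <;>
    [refine (hasFDerivAt_u8 p).congr_fderiv ?_;
      refine (hasFDerivAt_v8 p).congr_fderiv ?_;
      refine (hasFDerivAt_u8 p).neg.congr_fderiv ?_;
      refine (hasFDerivAt_v8 p).neg.congr_fderiv ?_] <;>
    ext x <;> simp [f8Jacobian, mulVec, vecHead, vecTail] <;> ring

theorem adjoint_fderiv_f8_eq_self_iff (p : E4) :
    ContinuousLinearMap.adjoint (fderiv ℝ f8 p) = fderiv ℝ f8 p ↔
      cos (p 0 + p 2) = 0 ∧ p 1 + p 3 = 0 := by
  rw [(hasFDerivAt_f8 p).fderiv, adjoint_toEuclideanCLM_eq_self_iff, isHermitian_f8Jacobian_iff,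
    cos_mul_cosh_eq_zero_and_sin_mul_sinh_eq_zero_iff]

theorem eq_mk4_iff (p : E4) (a b c d : ℝ) :
    p = mk4 a b c d ↔ p 0 = a ∧ p 1 = b ∧ p 2 = c ∧ p 3 = d := by
  rw [mk4, Equiv.eq_symm_apply]
  simp [funext_iff, Fin.forall_fin_succ]

theorem stmt_8 :
    (∀ p : E4,
      ContinuousLinearMap.adjoint (fderiv ℝ f8 p) = fderiv ℝ f8 p ↔
        (Real.cos (p 0 + p 2) = 0 ∧ p 1 + p 3 = 0)) ∧
    {p : E4 | ContinuousLinearMap.adjoint (fderiv ℝ f8 p) = fderiv ℝ f8 p} =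
      ⋃ k : ℤ, {p : E4 | ∃ a b : ℝ,
        p = mk4 a b (Real.pi / 2 + k * Real.pi - a) (-b)} := by
  refine ⟨adjoint_fderiv_f8_eq_self_iff, Set.ext fun p => ?_⟩
  simp [adjoint_fderiv_f8_eq_self_iff, eq_mk4_iff, cos_add_eq_zero_and_add_eq_zero_iff]

end
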